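/- Let q ≥ 3, β > 0, j ∈ [q] and s* ∈ [1/q, 1). Set a := 2βq·s*(1−s*)/(q−1), a' := 2β(1−s*)/(q−1), b := 2β·((1−s*)/(q−1))·(s* − (1−s*)/(q−1)), and let A be the q×q matrix with entries A_{jj} = a, A_{kk} = a' for k ≠ j, A_{kj} = −b for k ≠ j, and 0 elsewhere. Then a − a' = (q−1)b ≥ 0, and the eigenvalues of the symmetric matrix (A + Aᵀ)/2 are λ₁ := (1/2)(a + a' + √((a−a')² + (q−1)b²)), the value a' with multiplicity q−2, and λ_q := (1/2)(a + a' − √((a−a')² + (q−1)b²)); all of these eigenvalues are positive, and the largest absolute value of an eigenvalue of (A + Aᵀ)/2 equals λ₁. -/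

import Mathlib

/-!
The symmetric part of `A` is an arrowhead matrix: `a` at `(j, j)`, `a'` on the rest of the
diagonal and `-b/2` in the rest of row and column `j`. Taking the Schur complement of the block
`(t - a') • 1` shows that its characteristic polynomial is
`(X - a')^(q-2) * ((X - a)(X - a') - (q-1) b²/4)`, and the quadratic factor has the roots
`λ₁ ≥ λ_q`. Since `a = a' + (q-1) b` with `0 ≤ b < a'`, the discriminant is below `(a + a')²`,
so `λ_q > 0`; and `λ₁ ≥ a'` because the square root dominates `|a - a'|`.
-/

noncomputable section
attribute [local instance] Classical.propDecidable

open Finset Polynomial Matrix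

/-- The constant `a = 2βq·s*(1-s*)/(q-1)`. -/
def aC (q : ℕ) (β s : ℝ) : ℝ := 2 * β * q * s * (1 - s) / ((q : ℝ) - 1)

/-- The constant `a' = 2β(1-s*)/(q-1)`. -/
def aC' (q : ℕ) (β s : ℝ) : ℝ := 2 * β * (1 - s) / ((q : ℝ) - 1)

/-- The constant `b = 2β·((1-s*)/(q-1))·(s* - (1-s*)/(q-1))`. -/
def bC (q : ℕ) (β s : ℝ) : ℝ :=
  2 * β * ((1 - s) / ((q : ℝ) - 1)) * (s - (1 - s) / ((q : ℝ) - 1))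

/-- The matrix `A` with `A_{jj} = a`, `A_{kk} = a'` and `A_{kj} = -b` for `k ≠ j`,
and all other entries zero. -/
def matA (q : ℕ) (j : Fin q) (a a' b : ℝ) : Matrix (Fin q) (Fin q) ℝ :=
  fun k l => if k = j ∧ l = j then a else if k = l then a' else if l = j then -b else 0

/-- The symmetric part `(A + Aᵀ)/2` of `A = A(x)`. -/
def symA (q : ℕ) (j : Fin q) (β s : ℝ) : Matrix (Fin q) (Fin q) ℝ :=
  (1 / 2 : ℝ) • (matA q j (aC q β s) (aC' q β s) (bC q β s) +
    (matA q j (aC q β s) (aC' q β s) (bC q β s))ᵀ)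

/-- The eigenvalue `λ₁ = (a + a' + √((a-a')² + (q-1)b²))/2`. -/
def lam1 (q : ℕ) (β s : ℝ) : ℝ :=
  (aC q β s + aC' q β s +
    Real.sqrt ((aC q β s - aC' q β s) ^ 2 + ((q : ℝ) - 1) * (bC q β s) ^ 2)) / 2

/-- The eigenvalue `λ_q = (a + a' - √((a-a')² + (q-1)b²))/2`. -/
def lamq (q : ℕ) (β s : ℝ) : ℝ :=
  (aC q β s + aC' q β s -
    Real.sqrt ((aC q β s - aC' q β s) ^ 2 + ((q : ℝ) - 1) * (bC q β s) ^ 2)) / 2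

namespace Matrix

variable {n R : Type*} [Fintype n] [DecidableEq n]

def arrowMatrix [Zero R] (j : n) (α δ c : R) : Matrix n n R :=
  fun k l => if k = l then (if k = j then α else δ) else if k = j ∨ l = j then c else 0

theorem scalar_sub_arrowMatrix [CommRing R] (j : n) (α δ c t : R) :
    scalar n t - arrowMatrix j α δ c = arrowMatrix j (t - α) (t - δ) (-c) := by
  ext k l
  simp only [arrowMatrix, sub_apply, scalar_apply, diagonal_apply]
  split_ifs <;> simp_all

theorem det_arrowMatrix [Field R] (j : n) (α δ c : R) (hδ : δ ≠ 0) (hn : 2 ≤ Fintype.card n) :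
    (arrowMatrix j α δ c).det =
      δ ^ (Fintype.card n - 2) * (α * δ - ((Fintype.card n : R) - 1) * c ^ 2) := by
  let e := Equiv.sumCompl (· = j)
  have hblocks : (arrowMatrix j α δ c).submatrix e e =
      fromBlocks (of fun _ _ => α) (of fun _ _ => c) (of fun _ _ => c) (δ • 1) := by
    ext (⟨k, hk⟩ | ⟨k, hk⟩) (⟨l, hl⟩ | ⟨l, hl⟩)
    · simp_all [arrowMatrix, e]
    · simp [arrowMatrix, e, hk, hl, Ne.symm hl]
    · simp [arrowMatrix, e, hl, hk]
    · by_cases hkl : k = l <;> simp [arrowMatrix, e, hk, hl, hkl]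
  have hcard : Fintype.card {k // ¬k = j} = Fintype.card n - 1 := by
    rw [Fintype.card_subtype_compl, Fintype.card_subtype_eq]
  have : Unique {k // k = j} := ⟨⟨⟨j, rfl⟩⟩, fun ⟨_, hk⟩ => Subtype.ext hk⟩
  have hinv : (δ • 1 : Matrix {k // ¬k = j} {k // ¬k = j} R) * (δ⁻¹ • 1) = 1 := by
    rw [smul_mul_smul_comm, mul_inv_cancel₀ hδ, one_mul, one_smul]
  have := invertibleOfRightInverse _ _ hinv
  rw [← det_submatrix_equiv_self e, hblocks, det_fromBlocks₂₂, det_smul, det_one, det_unique,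
    hcard, invOf_eq_right_inv hinv]
  obtain ⟨m, hm⟩ : ∃ m, Fintype.card n = m + 2 := ⟨_, (Nat.sub_add_cancel hn).symm⟩
  simp only [hm, Nat.add_one_sub_one, add_tsub_cancel_right, mul_one, Matrix.mul_smul,
    Matrix.mul_one, smul_of, sub_apply, of_apply, mul_apply, Pi.smul_apply, smul_eq_mul, sum_const,
    card_univ, hcard, nsmul_eq_mul, Nat.cast_add, Nat.cast_one, Nat.cast_ofNat]
  field_simp
  ring

theorem charpoly_arrowMatrix [Field R] [Infinite R] (j : n) (α δ c : R)
    (hn : 2 ≤ Fintype.card n) :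
    (arrowMatrix j α δ c).charpoly = (X - C δ) ^ (Fintype.card n - 2) *
      ((X - C α) * (X - C δ) - C (((Fintype.card n : R) - 1) * c ^ 2)) := by
  -- Both sides agree at every `t ≠ δ`, where the Schur complement argument applies.
  refine eq_of_infinite_eval_eq _ _ ((Set.finite_singleton δ).infinite_compl.mono fun t ht => ?_)
  rw [Set.mem_ofPred_eq, eval_charpoly, scalar_sub_arrowMatrix,
    det_arrowMatrix _ _ _ _ (sub_ne_zero.mpr ht) hn]
  simp

end Matrix

theorem symA_eq_arrowMatrix (q : ℕ) (j : Fin q) (β s : ℝ) :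
    symA q j β s = arrowMatrix j (aC q β s) (aC' q β s) (-(bC q β s / 2)) := by
  ext k l
  simp only [symA, matA, arrowMatrix, Matrix.smul_apply, Matrix.add_apply, transpose_apply,
    smul_eq_mul]
  split_ifs <;> grind

section Parameters

variable {q : ℕ} {β s : ℝ}

theorem aC_sub_aC' (hq : 1 < q) : aC q β s - aC' q β s = ((q : ℝ) - 1) * bC q β s := by
  have : (q : ℝ) - 1 ≠ 0 := sub_ne_zero.mpr (by exact_mod_cast hq.ne')
  unfold aC aC' bC
  field_simp
  ring

theorem aC'_pos (hq : 1 < q) (hβ : 0 < β) (hs : s < 1) : 0 < aC' q β s := by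
  have : (1 : ℝ) < q := by exact_mod_cast hq
  unfold aC'
  have : 0 < 1 - s := by linarith
  positivity

theorem bC_nonneg (hq : 1 < q) (hβ : 0 ≤ β) (hs0 : 1 / (q : ℝ) ≤ s) (hs1 : s ≤ 1) :
    0 ≤ bC q β s := by
  have hq' : (0 : ℝ) < q - 1 := by rw [sub_pos]; exact_mod_cast hq
  have hqs : 1 ≤ q * s := by rwa [div_le_iff₀' (by linarith)] at hs0
  have : (1 - s) / ((q : ℝ) - 1) ≤ s := by rw [div_le_iff₀ hq']; linarith
  unfold bC
  have : 0 ≤ 1 - s := by linarith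
  have : 0 ≤ s - (1 - s) / ((q : ℝ) - 1) := by linarith
  positivity

theorem bC_lt_aC' (hq : 1 < q) (hβ : 0 < β) (hs : s < 1) : bC q β s < aC' q β s := by
  have hq' : (0 : ℝ) < q - 1 := by rw [sub_pos]; exact_mod_cast hq
  have hu : 0 < 2 * β * ((1 - s) / ((q : ℝ) - 1)) := by
    have : 0 < 1 - s := by linarith
    positivity
  calc bC q β s < 2 * β * ((1 - s) / ((q : ℝ) - 1)) * 1 := by
        unfold bC
        gcongr
        have : 0 < (1 - s) / ((q : ℝ) - 1) := by positivity
        linarith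
    _ = aC' q β s := by unfold aC'; ring

theorem mul_sq_bC_lt (hq : 1 < q) (hβ : 0 < β) (hs0 : 1 / (q : ℝ) ≤ s) (hs1 : s < 1) :
    ((q : ℝ) - 1) * bC q β s ^ 2 < 4 * aC q β s * aC' q β s := by
  have hq' : (0 : ℝ) < q - 1 := by rw [sub_pos]; exact_mod_cast hq
  have hb := bC_nonneg hq hβ.le hs0 hs1.le
  have hba := bC_lt_aC' hq hβ hs1
  rw [eq_add_of_sub_eq' (aC_sub_aC' hq)]
  nlinarith [mul_nonneg hq'.le hb, mul_le_mul_of_nonneg_left hba.le (mul_nonneg hq'.le hb)]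

theorem lamq_le_lam1 : lamq q β s ≤ lam1 q β s := by
  unfold lam1 lamq
  linarith [Real.sqrt_nonneg ((aC q β s - aC' q β s) ^ 2 + ((q : ℝ) - 1) * bC q β s ^ 2)]

theorem aC'_le_lam1 (hq : 1 ≤ q) : aC' q β s ≤ lam1 q β s := by
  have hq' : (0 : ℝ) ≤ q - 1 := by rw [sub_nonneg]; exact_mod_cast hq
  have := Real.abs_le_sqrt
    (le_add_of_nonneg_right (mul_nonneg hq' (sq_nonneg (bC q β s))) :
      (aC q β s - aC' q β s) ^ 2 ≤ (aC q β s - aC' q β s) ^ 2 + ((q : ℝ) - 1) * bC q β s ^ 2)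
  unfold lam1
  linarith [neg_abs_le (aC q β s - aC' q β s)]

theorem lamq_pos (hq : 1 < q) (hβ : 0 < β) (hs0 : 1 / (q : ℝ) ≤ s) (hs1 : s < 1) :
    0 < lamq q β s := by
  have hq' : (0 : ℝ) ≤ q - 1 := by rw [sub_nonneg]; exact_mod_cast hq.le
  have ha' := aC'_pos hq hβ hs1
  have ha : aC' q β s ≤ aC q β s := by
    linarith [aC_sub_aC' (β := β) (s := s) hq, mul_nonneg hq' (bC_nonneg hq hβ.le hs0 hs1.le)]
  have : √((aC q β s - aC' q β s) ^ 2 + ((q : ℝ) - 1) * bC q β s ^ 2) < aC q β s + aC' q β s :=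
    (Real.sqrt_lt' (by linarith)).mpr (by nlinarith [mul_sq_bC_lt hq hβ hs0 hs1])
  unfold lamq
  linarith

end Parameters

theorem X_sub_C_mul_X_sub_C_eq {x y e r : ℝ} (hr : r ^ 2 = (x - y) ^ 2 + e) :
    (X - C ((x + y + r) / 2)) * (X - C ((x + y - r) / 2)) = (X - C x) * (X - C y) - C (e / 4) := by
  have hsum : C ((x + y + r) / 2) + C ((x + y - r) / 2) = C x + C y := by
    rw [← map_add, ← map_add]; congr 1; ring
  have hprod : C ((x + y + r) / 2) * C ((x + y - r) / 2) = C x * C y - C (e / 4) := by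
    rw [← map_mul, ← map_mul, ← map_sub]; congr 1; linear_combination (-1 / 4 : ℝ) * hr
  linear_combination (-X) * hsum + hprod

theorem charpoly_symA {q : ℕ} (j : Fin q) (β s : ℝ) (hq : 2 ≤ q) :
    (symA q j β s).charpoly =
      (X - C (lam1 q β s)) * (X - C (aC' q β s)) ^ (q - 2) * (X - C (lamq q β s)) := by
  have hq' : (0 : ℝ) ≤ q - 1 := by rw [sub_nonneg]; exact_mod_cast (by omega : 1 ≤ q)
  have hr := Real.sq_sqrt
    (by positivity : 0 ≤ (aC q β s - aC' q β s) ^ 2 + ((q : ℝ) - 1) * bC q β s ^ 2)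
  rw [symA_eq_arrowMatrix, charpoly_arrowMatrix _ _ _ _ (by rwa [Fintype.card_fin]),
    Fintype.card_fin,
    show ((q : ℝ) - 1) * (-(bC q β s / 2)) ^ 2 = ((q : ℝ) - 1) * bC q β s ^ 2 / 4 by ring,
    ← X_sub_C_mul_X_sub_C_eq hr, lam1, lamq]
  ring

theorem abs_le_of_isRoot_mul_pow_mul {l₁ l₂ m t : ℝ} {k : ℕ}
    (h : ((X - C l₁) * (X - C m) ^ k * (X - C l₂)).IsRoot t)
    (hm : 0 ≤ m) (hml : m ≤ l₁) (hl₂ : 0 ≤ l₂) (hl : l₂ ≤ l₁) : |t| ≤ l₁ := by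
  simp only [IsRoot, eval_mul, eval_pow, eval_sub, eval_X, eval_C, mul_eq_zero, pow_eq_zero_iff',
    sub_eq_zero] at h
  rcases h with (rfl | ⟨rfl, -⟩) | rfl <;> rw [abs_of_nonneg] <;> linarith

theorem stmt13 (q : ℕ) (hq : 3 ≤ q) (β : ℝ) (hβ : 0 < β) (j : Fin q)
    (s : ℝ) (hs0 : 1 / (q : ℝ) ≤ s) (hs1 : s < 1) :
    (aC q β s - aC' q β s = ((q : ℝ) - 1) * bC q β s ∧ 0 ≤ bC q β s) ∧
    (symA q j β s).charpoly =
      (X - C (lam1 q β s)) * (X - C (aC' q β s)) ^ (q - 2) * (X - C (lamq q β s)) ∧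
    (0 < lam1 q β s ∧ 0 < aC' q β s ∧ 0 < lamq q β s) ∧
    (∀ t : ℝ, (symA q j β s).charpoly.IsRoot t → |t| ≤ lam1 q β s) ∧
    (symA q j β s).charpoly.IsRoot (lam1 q β s) := by
  have hq1 : 1 < q := by omega
  have hcp := charpoly_symA j β s (by omega)
  have ha' := aC'_pos hq1 hβ hs1
  have hlamq := lamq_pos hq1 hβ hs0 hs1
  refine ⟨⟨aC_sub_aC' hq1, bC_nonneg hq1 hβ.le hs0 hs1.le⟩, hcp,
    ⟨hlamq.trans_le lamq_le_lam1, ha', hlamq⟩, fun t ht => ?_, by simp [hcp]⟩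
  rw [hcp] at ht
  exact abs_le_of_isRoot_mul_pow_mul ht ha'.le (aC'_le_lam1 hq1.le) hlamq.le lamq_le_lam1
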